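/- For every integer T ≥ 1 and every γ ∈ W, ∫_G V_T(y) dγ(y,u) ≤ ∫_G k(y,u) dγ(y,u). (Here V_T is lower semicontinuous on Y, hence Borel measurable and bounded, so the left-hand integral is well defined.) -/

import Mathlib

open MeasureTheory Filter Topology Set

noncomputable section

variable {m : ℕ} {U₀ : Type*} [MetricSpace U₀] [CompactSpace U₀]
  [MeasurableSpace U₀] [BorelSpace U₀]

/-- The set `G = {(y,u) : y ∈ Y, u ∈ U y, f (y,u) ∈ Y}`. -/
def Gset (Y : Set (Fin m → ℝ)) (U : (Fin m → ℝ) → Set U₀)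
    (f : (Fin m → ℝ) × U₀ → (Fin m → ℝ)) : Set ((Fin m → ℝ) × U₀) :=
  {p | p.1 ∈ Y ∧ p.2 ∈ U p.1 ∧ f p ∈ Y}

/-- Admissible process from the initial condition `y₀`. -/
def Admissible (Y : Set (Fin m → ℝ)) (U : (Fin m → ℝ) → Set U₀)
    (f : (Fin m → ℝ) × U₀ → (Fin m → ℝ)) (y₀ : Fin m → ℝ)
    (y : ℕ → (Fin m → ℝ)) (u : ℕ → U₀) : Prop :=
  y 0 = y₀ ∧ ∀ t : ℕ, u t ∈ U (y t) ∧ y t ∈ Y ∧ y (t + 1) = f (y t, u t)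

/-- Admissible process without a prescribed initial condition. -/
def AdmissibleProc (Y : Set (Fin m → ℝ)) (U : (Fin m → ℝ) → Set U₀)
    (f : (Fin m → ℝ) × U₀ → (Fin m → ℝ))
    (y : ℕ → (Fin m → ℝ)) (u : ℕ → U₀) : Prop :=
  ∀ t : ℕ, u t ∈ U (y t) ∧ y t ∈ Y ∧ y (t + 1) = f (y t, u t)

/-- The finite-horizon value function `V_T(y₀)`. -/
def VT (Y : Set (Fin m → ℝ)) (U : (Fin m → ℝ) → Set U₀)
    (f : (Fin m → ℝ) × U₀ → (Fin m → ℝ)) (k : (Fin m → ℝ) × U₀ → ℝ)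
    (T : ℕ) (y₀ : Fin m → ℝ) : ℝ :=
  sInf {c | ∃ y u, Admissible Y U f y₀ y u ∧
    c = (∑ t ∈ Finset.range T, k (y t, u t)) / (T : ℝ)}

/-- The discounted value function `h_α(y₀)`. -/
def hdisc (Y : Set (Fin m → ℝ)) (U : (Fin m → ℝ) → Set U₀)
    (f : (Fin m → ℝ) × U₀ → (Fin m → ℝ)) (k : (Fin m → ℝ) × U₀ → ℝ)
    (α : ℝ) (y₀ : Fin m → ℝ) : ℝ :=
  (1 - α) * sInf {c | ∃ y u, Admissible Y U f y₀ y u ∧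
    c = ∑' t : ℕ, α ^ t * k (y t, u t)}

/-- The set `W` of probability measures on `G` with zero drift. -/
def Wset (Y : Set (Fin m → ℝ)) (U : (Fin m → ℝ) → Set U₀)
    (f : (Fin m → ℝ) × U₀ → (Fin m → ℝ)) :
    Set (Measure ((Fin m → ℝ) × U₀)) :=
  {γ | IsProbabilityMeasure γ ∧ γ (Gset Y U f)ᶜ = 0 ∧
    ∀ φ : (Fin m → ℝ) → ℝ, ContinuousOn φ Y →
      ∫ p, (φ (f p) - φ p.1) ∂γ = 0}

/-- The set `W₁(y₀)`. -/
def W1set (Y : Set (Fin m → ℝ)) (U : (Fin m → ℝ) → Set U₀)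
    (f : (Fin m → ℝ) × U₀ → (Fin m → ℝ)) (y₀ : Fin m → ℝ) :
    Set (Measure ((Fin m → ℝ) × U₀)) :=
  {γ | γ ∈ Wset Y U f ∧ ∃ ξ : Measure ((Fin m → ℝ) × U₀),
    IsFiniteMeasure ξ ∧ ξ (Gset Y U f)ᶜ = 0 ∧
    ∀ φ : (Fin m → ℝ) → ℝ, ContinuousOn φ Y →
      ∫ p, (φ p.1 - φ y₀) ∂γ = ∫ p, (φ (f p) - φ p.1) ∂ξ}

/-- The set `W₂(y₀)`. -/
def W2set (Y : Set (Fin m → ℝ)) (U : (Fin m → ℝ) → Set U₀)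
    (f : (Fin m → ℝ) × U₀ → (Fin m → ℝ)) (y₀ : Fin m → ℝ) :
    Set (Measure ((Fin m → ℝ) × U₀)) :=
  {γ | γ ∈ Wset Y U f ∧ ∃ ξ : ℕ → Measure ((Fin m → ℝ) × U₀),
    (∀ i, IsFiniteMeasure (ξ i) ∧ (ξ i) (Gset Y U f)ᶜ = 0) ∧
    ∀ φ : (Fin m → ℝ) → ℝ, ContinuousOn φ Y →
      Tendsto (fun i => ∫ p, (φ (f p) - φ p.1) ∂(ξ i)) atTop
        (𝓝 (∫ p, (φ p.1 - φ y₀) ∂γ))}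

/-- The optimal value `d*(y₀)` of the dual IDLP problem. -/
def dstar (Y : Set (Fin m → ℝ)) (U : (Fin m → ℝ) → Set U₀)
    (f : (Fin m → ℝ) × U₀ → (Fin m → ℝ)) (k : (Fin m → ℝ) × U₀ → ℝ)
    (y₀ : Fin m → ℝ) : ℝ :=
  sSup {μ : ℝ | ∃ ψ η : (Fin m → ℝ) → ℝ, ContinuousOn ψ Y ∧ ContinuousOn η Y ∧
    ∀ p ∈ Gset Y U f,
      0 ≤ k p + (ψ y₀ - ψ p.1) + η (f p) - η p.1 - μ ∧
      0 ≤ ψ (f p) - ψ p.1}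

/-- The optimal value `k*(y₀)` of the primal IDLP problem. -/
def kstar (Y : Set (Fin m → ℝ)) (U : (Fin m → ℝ) → Set U₀)
    (f : (Fin m → ℝ) × U₀ → (Fin m → ℝ)) (k : (Fin m → ℝ) × U₀ → ℝ)
    (y₀ : Fin m → ℝ) : ℝ :=
  sInf {c | ∃ γ ξ : Measure ((Fin m → ℝ) × U₀),
    γ ∈ Wset Y U f ∧ IsFiniteMeasure ξ ∧ ξ (Gset Y U f)ᶜ = 0 ∧
    (∀ φ : (Fin m → ℝ) → ℝ, ContinuousOn φ Y →
      ∫ p, (φ y₀ - φ p.1) ∂γ + ∫ p, (φ (f p) - φ p.1) ∂ξ = 0) ∧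
    c = ∫ p, k p ∂γ}

/-- Occupational measure of a process over `{0, …, T-1}`. -/
def occMeas (y : ℕ → (Fin m → ℝ)) (u : ℕ → U₀) (T : ℕ) :
    Measure ((Fin m → ℝ) × U₀) :=
  (T : ENNReal)⁻¹ • ∑ t ∈ Finset.range T, Measure.dirac (y t, u t)

/-- Discounted occupational measure of a process. -/
def discMeas (α : ℝ) (y : ℕ → (Fin m → ℝ)) (u : ℕ → U₀) :
    Measure ((Fin m → ℝ) × U₀) :=
  Measure.sum fun t : ℕ =>
    ENNReal.ofReal ((1 - α) * α ^ t) • Measure.dirac (y t, u t)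

/-- The set `Γ_T(y₀)` of occupational measures. -/
def GammaT (Y : Set (Fin m → ℝ)) (U : (Fin m → ℝ) → Set U₀)
    (f : (Fin m → ℝ) × U₀ → (Fin m → ℝ)) (y₀ : Fin m → ℝ) (T : ℕ) :
    Set (Measure ((Fin m → ℝ) × U₀)) :=
  {γ | ∃ y u, Admissible Y U f y₀ y u ∧ γ = occMeas y u T}

/-- The set `Θ_α(y₀)` of discounted occupational measures. -/
def Theta (Y : Set (Fin m → ℝ)) (U : (Fin m → ℝ) → Set U₀)
    (f : (Fin m → ℝ) × U₀ → (Fin m → ℝ)) (α : ℝ) (y₀ : Fin m → ℝ) :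
    Set (Measure ((Fin m → ℝ) × U₀)) :=
  {γ | ∃ y u, Admissible Y U f y₀ y u ∧ γ = discMeas α y u}

/-- Weak* convergence of a sequence of measures (tested against functions
continuous on `G`). -/
def WeakStarTendstoOn (G : Set ((Fin m → ℝ) × U₀))
    (γs : ℕ → Measure ((Fin m → ℝ) × U₀))
    (γ : Measure ((Fin m → ℝ) × U₀)) : Prop :=
  ∀ q : (Fin m → ℝ) × U₀ → ℝ, ContinuousOn q G →
    Tendsto (fun i => ∫ p, q p ∂(γs i)) atTop (𝓝 (∫ p, q p ∂γ))

/-- A `T`-periodic process. -/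
def PeriodicProc (y : ℕ → (Fin m → ℝ)) (u : ℕ → U₀) (T : ℕ) : Prop :=
  ∀ t : ℕ, y (t + T) = y t ∧ u (t + T) = u t

/-- The point `z` is finite-time reachable from `y₀`. -/
def FTReachable (Y : Set (Fin m → ℝ)) (U : (Fin m → ℝ) → Set U₀)
    (f : (Fin m → ℝ) × U₀ → (Fin m → ℝ)) (y₀ z : Fin m → ℝ) : Prop :=
  ∃ (tb : ℕ) (ty : ℕ → (Fin m → ℝ)) (tu : ℕ → U₀),
    Admissible Y U f y₀ ty tu ∧ ty tb = z

/-- The set `Γ_per(y₀)` of occupational measures of periodic processes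
finite-time reachable from `y₀`. -/
def GammaPer (Y : Set (Fin m → ℝ)) (U : (Fin m → ℝ) → Set U₀)
    (f : (Fin m → ℝ) × U₀ → (Fin m → ℝ)) (y₀ : Fin m → ℝ) :
    Set (Measure ((Fin m → ℝ) × U₀)) :=
  {γ | ∃ (T : ℕ) (y : ℕ → (Fin m → ℝ)) (u : ℕ → U₀), 1 ≤ T ∧
    AdmissibleProc Y U f y u ∧ PeriodicProc y u T ∧
    FTReachable Y U f y₀ (y 0) ∧ γ = occMeas y u T}

/-- The optimal value `V_per(y₀)` over periodic regimes. -/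
def Vper (Y : Set (Fin m → ℝ)) (U : (Fin m → ℝ) → Set U₀)
    (f : (Fin m → ℝ) × U₀ → (Fin m → ℝ)) (k : (Fin m → ℝ) × U₀ → ℝ)
    (y₀ : Fin m → ℝ) : ℝ :=
  sInf {c | ∃ (T : ℕ) (y : ℕ → (Fin m → ℝ)) (u : ℕ → U₀), 1 ≤ T ∧
    AdmissibleProc Y U f y u ∧ PeriodicProc y u T ∧
    FTReachable Y U f y₀ (y 0) ∧
    c = (∑ t ∈ Finset.range T, k (y t, u t)) / (T : ℝ)}

/-- The set `K` of continuous functions used in the alternative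
representation of the limit optimal values. -/
def Kcal (Y : Set (Fin m → ℝ)) (U : (Fin m → ℝ) → Set U₀)
    (f : (Fin m → ℝ) × U₀ → (Fin m → ℝ)) (k : (Fin m → ℝ) × U₀ → ℝ) :
    Set ((Fin m → ℝ) → ℝ) :=
  {w | ContinuousOn w Y ∧ (∀ p ∈ Gset Y U f, w p.1 ≤ w (f p)) ∧
    ∀ γ ∈ Wset Y U f, ∫ p, w p.1 ∂γ ≤ ∫ p, k p ∂γ}

/-- The optimal value `d*(θ, y₀)` of the perturbed dual problem. -/
def dstarTheta (Y : Set (Fin m → ℝ)) (U : (Fin m → ℝ) → Set U₀)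
    (f : (Fin m → ℝ) × U₀ → (Fin m → ℝ)) (k : (Fin m → ℝ) × U₀ → ℝ)
    (θ : ℝ) (y₀ : Fin m → ℝ) : ℝ :=
  sSup {μ : ℝ | ∃ ψ η : (Fin m → ℝ) → ℝ, ContinuousOn ψ Y ∧ ContinuousOn η Y ∧
    ∀ p ∈ Gset Y U f,
      0 ≤ k p + (ψ y₀ - ψ p.1) + η (f p) - η p.1 - μ ∧
      -θ ≤ ψ (f p) - ψ p.1}

/-- The optimal value `d̄*(θ, y₀)` of the perturbed dual problem in the
`ψ(y₀)` form. -/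
def dbarTheta (Y : Set (Fin m → ℝ)) (U : (Fin m → ℝ) → Set U₀)
    (f : (Fin m → ℝ) × U₀ → (Fin m → ℝ)) (k : (Fin m → ℝ) × U₀ → ℝ)
    (θ : ℝ) (y₀ : Fin m → ℝ) : ℝ :=
  sSup {c : ℝ | ∃ ψ η : (Fin m → ℝ) → ℝ, ContinuousOn ψ Y ∧ ContinuousOn η Y ∧
    (∀ p ∈ Gset Y U f,
      0 ≤ k p - ψ p.1 + η (f p) - η p.1 ∧
      -θ ≤ ψ (f p) - ψ p.1) ∧ c = ψ y₀}

/-- The optimal value `k*(θ, y₀)` of the perturbed primal problem. -/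
def kstarTheta (Y : Set (Fin m → ℝ)) (U : (Fin m → ℝ) → Set U₀)
    (f : (Fin m → ℝ) × U₀ → (Fin m → ℝ)) (k : (Fin m → ℝ) × U₀ → ℝ)
    (θ : ℝ) (y₀ : Fin m → ℝ) : ℝ :=
  sInf {c | ∃ γ ξ : Measure ((Fin m → ℝ) × U₀),
    γ ∈ Wset Y U f ∧ IsFiniteMeasure ξ ∧ ξ (Gset Y U f)ᶜ = 0 ∧
    (∀ φ : (Fin m → ℝ) → ℝ, ContinuousOn φ Y →
      ∫ p, (φ y₀ - φ p.1) ∂γ + ∫ p, (φ (f p) - φ p.1) ∂ξ = 0) ∧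
    c = ∫ p, k p ∂γ + θ * (ξ Set.univ).toReal}

/-!
Write `minCost T = T • V_T` for the optimal total cost over `T` steps. It obeys the dynamic
programming inequality `minCost (T + 1) y ≤ k (y, u) + minCost T (f (y, u))` on `G`. For
`γ ∈ W` the images of `γ` under `f` and under `(y, u) ↦ y` agree, since bounded continuous
functions determine a finite Borel measure; hence `∫ φ ∘ f dγ = ∫ φ (y) dγ` for every Borel `φ`,
and integrating the inequality gives `∫ minCost T dγ ≤ T ∫ k dγ` by induction on `T`.
The Borel measurability of `minCost T` comes from its lower semicontinuity on `Y`, which passes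
through Bellman's equation `minCost (T + 1) y = min_u (k (y, u) + minCost T (f (y, u)))`
because `G` is compact.
-/

section Semicontinuity

variable {X V : Type*}

def fiberInf (K : Set (X × V)) (g : X × V → ℝ) (x : X) : ℝ :=
  sInf ((fun v => g (x, v)) '' {v | (x, v) ∈ K})

theorem fiberInf_le {K : Set (X × V)} {g : X × V → ℝ} (hbdd : BddBelow (g '' K)) {x : X}
    {v : V} (hxv : (x, v) ∈ K) : fiberInf K g x ≤ g (x, v) :=
  csInf_le (hbdd.mono <| by rintro _ ⟨w, hw, rfl⟩; exact mem_image_of_mem g hw) ⟨v, hxv, rfl⟩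

variable [TopologicalSpace X] [TopologicalSpace V]

theorem lowerSemicontinuousOn_fiberInf [T2Space X] {K : Set (X × V)} (hK : IsCompact K)
    {g : X × V → ℝ} (hg : LowerSemicontinuousOn g K) (hbdd : BddBelow (g '' K)) :
    LowerSemicontinuousOn (fiberInf K g) (Prod.fst '' K) := by
  rintro _ ⟨⟨x, v⟩, hxv, rfl⟩ c hc
  obtain ⟨c', hcc', hc'⟩ := exists_between hc
  -- the projection of the compact sublevel set `{g ≤ c'}` is closed and misses `x`
  have hclosed : IsClosed (Prod.fst '' (K ∩ g ⁻¹' Iic c')) :=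
    ((hg.isCompact_inter_preimage_Iic hK c').image continuous_fst).isClosed
  have hx : x ∉ Prod.fst '' (K ∩ g ⁻¹' Iic c') := by
    rintro ⟨⟨_, w⟩, ⟨hw, hwc⟩, rfl⟩
    exact hc'.not_ge ((fiberInf_le hbdd hw).trans hwc)
  filter_upwards [nhdsWithin_le_nhds (hclosed.isOpen_compl.mem_nhds hx), self_mem_nhdsWithin]
    with _ hz ⟨⟨_, w⟩, hw, rfl⟩
  refine hcc'.trans_le (le_csInf ⟨_, w, hw, rfl⟩ ?_)
  rintro _ ⟨w', hw', rfl⟩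
  by_contra! h
  exact hz ⟨_, ⟨hw', h.le⟩, rfl⟩

theorem LowerSemicontinuousOn.measurable_of_eq_const_off [MeasurableSpace X]
    [OpensMeasurableSpace X] {s : Set X} (hs : MeasurableSet s) {g : X → ℝ}
    (hg : LowerSemicontinuousOn g s) {c : ℝ} (hc : ∀ x ∉ s, g x = c) : Measurable g := by
  refine measurable_of_restrict_of_restrict_compl hs
    (lowerSemicontinuous_restrict_iff.2 hg).measurable ?_
  have : sᶜ.domRestrict g = fun _ => c := funext fun x => hc x x.2
  exact this ▸ measurable_const

end Semicontinuity

section Dynamics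

variable {V : Type*} {Y : Set (Fin m → ℝ)} {U : (Fin m → ℝ) → Set V}
  {f : (Fin m → ℝ) × V → (Fin m → ℝ)} {k : (Fin m → ℝ) × V → ℝ}
  {T : ℕ} {C : ℝ} {y₀ : Fin m → ℝ} {y : ℕ → (Fin m → ℝ)} {u : ℕ → V}

theorem mapsTo_Gset : MapsTo f (Gset Y U f) Y := fun _ hp => hp.2.2

theorem fst_image_Gset (hA : ∀ y ∈ Y, ∃ u ∈ U y, f (y, u) ∈ Y) :
    Prod.fst '' Gset Y U f = Y := by
  refine Subset.antisymm (image_subset_iff.2 fun p hp => hp.1) fun y hy => ?_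
  obtain ⟨u, hu, hfu⟩ := hA y hy
  exact ⟨(y, u), ⟨hy, hu, hfu⟩, rfl⟩

theorem isCompact_Gset [TopologicalSpace V] [CompactSpace V] (hYcomp : IsCompact Y)
    (hUgraph : IsClosed {p : (Fin m → ℝ) × V | p.1 ∈ Y ∧ p.2 ∈ U p.1})
    (hf : Continuous f) : IsCompact (Gset Y U f) := by
  have hG : Gset Y U f = {p : (Fin m → ℝ) × V | p.1 ∈ Y ∧ p.2 ∈ U p.1} ∩ f ⁻¹' Y := by
    ext p; simp [Gset, and_assoc]
  refine (hYcomp.prod isCompact_univ).of_isClosed_subset ?_ fun p hp => ⟨hp.1, mem_univ _⟩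
  exact hG ▸ hUgraph.inter (hYcomp.isClosed.preimage hf)

theorem Admissible.mem_Gset (h : Admissible Y U f y₀ y u) (t : ℕ) :
    (y t, u t) ∈ Gset Y U f :=
  ⟨(h.2 t).2.1, (h.2 t).1, (h.2 t).2.2 ▸ (h.2 (t + 1)).2.1⟩

theorem Admissible.tail (h : Admissible Y U f y₀ y u) :
    Admissible Y U f (f (y₀, u 0)) (fun t => y (t + 1)) (fun t => u (t + 1)) :=
  ⟨h.1 ▸ (h.2 0).2.2, fun t => h.2 (t + 1)⟩

theorem Admissible.cons {p : (Fin m → ℝ) × V} (hp : p ∈ Gset Y U f)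
    (h : Admissible Y U f (f p) y u) :
    Admissible Y U f p.1 (fun | 0 => p.1 | t + 1 => y t) (fun | 0 => p.2 | t + 1 => u t) := by
  refine ⟨rfl, fun t => ?_⟩
  cases t with
  | zero => exact ⟨hp.2.1, hp.1, h.1⟩
  | succ t => exact h.2 t

theorem exists_admissible (hA : ∀ y ∈ Y, ∃ u ∈ U y, f (y, u) ∈ Y) (hy₀ : y₀ ∈ Y) :
    ∃ y u, Admissible Y U f y₀ y u := by
  have : Nonempty V := ⟨(hA y₀ hy₀).choose⟩
  choose! σ hσU hσY using hA
  set y : ℕ → (Fin m → ℝ) := fun t => (fun z => f (z, σ z))^[t] y₀ with hy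
  have hyY : ∀ t, y t ∈ Y := by
    intro t
    induction t with
    | zero => exact hy₀
    | succ t ih => simpa only [hy, Function.iterate_succ_apply'] using hσY _ ih
  exact ⟨y, fun t => σ (y t), rfl, fun t =>
    ⟨hσU _ (hyY t), hyY t, Function.iterate_succ_apply' _ _ _⟩⟩

def costSet (Y : Set (Fin m → ℝ)) (U : (Fin m → ℝ) → Set V)
    (f : (Fin m → ℝ) × V → (Fin m → ℝ)) (k : (Fin m → ℝ) × V → ℝ)
    (T : ℕ) (y₀ : Fin m → ℝ) : Set ℝ :=
  {c | ∃ y u, Admissible Y U f y₀ y u ∧ c = ∑ t ∈ Finset.range T, k (y t, u t)}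

def minCost (Y : Set (Fin m → ℝ)) (U : (Fin m → ℝ) → Set V)
    (f : (Fin m → ℝ) × V → (Fin m → ℝ)) (k : (Fin m → ℝ) × V → ℝ)
    (T : ℕ) (y₀ : Fin m → ℝ) : ℝ :=
  sInf (costSet Y U f k T y₀)

open scoped Pointwise in
theorem VT_eq_minCost_div : VT Y U f k T y₀ = minCost Y U f k T y₀ / T := by
  have hset : {c | ∃ y u, Admissible Y U f y₀ y u ∧
      c = (∑ t ∈ Finset.range T, k (y t, u t)) / (T : ℝ)} =
      (T : ℝ)⁻¹ • costSet Y U f k T y₀ := by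
    ext c
    simp only [costSet, mem_ofPred_eq, mem_smul_set, smul_eq_mul]
    constructor
    · rintro ⟨y, u, h, rfl⟩
      exact ⟨_, ⟨y, u, h, rfl⟩, inv_mul_eq_div _ _⟩
    · rintro ⟨_, ⟨y, u, h, rfl⟩, rfl⟩
      exact ⟨y, u, h, inv_mul_eq_div _ _⟩
  rw [VT, minCost, hset, Real.sInf_smul_of_nonneg (by positivity), smul_eq_mul,
    inv_mul_eq_div]

theorem costSet_nonempty (hA : ∀ y ∈ Y, ∃ u ∈ U y, f (y, u) ∈ Y) (hy₀ : y₀ ∈ Y) :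
    (costSet Y U f k T y₀).Nonempty :=
  let ⟨y, u, h⟩ := exists_admissible hA hy₀
  ⟨_, y, u, h, rfl⟩

theorem abs_le_of_mem_costSet (hC : ∀ p ∈ Gset Y U f, |k p| ≤ C) {c : ℝ}
    (hc : c ∈ costSet Y U f k T y₀) : |c| ≤ T * C := by
  obtain ⟨y, u, h, rfl⟩ := hc
  calc |∑ t ∈ Finset.range T, k (y t, u t)|
      ≤ ∑ t ∈ Finset.range T, |k (y t, u t)| := Finset.abs_sum_le_sum_abs _ _
    _ ≤ ∑ _t ∈ Finset.range T, C := Finset.sum_le_sum fun t _ => hC _ (h.mem_Gset t)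
    _ = T * C := by simp

theorem bddBelow_costSet (hC : ∀ p ∈ Gset Y U f, |k p| ≤ C) :
    BddBelow (costSet Y U f k T y₀) :=
  ⟨-(T * C), fun _ hc => neg_le_of_abs_le (abs_le_of_mem_costSet hC hc)⟩

theorem abs_minCost_le (hA : ∀ y ∈ Y, ∃ u ∈ U y, f (y, u) ∈ Y)
    (hC : ∀ p ∈ Gset Y U f, |k p| ≤ C) (hy₀ : y₀ ∈ Y) :
    |minCost Y U f k T y₀| ≤ T * C := by
  obtain ⟨c, hc⟩ := costSet_nonempty (k := k) (T := T) hA hy₀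
  refine abs_le.2 ⟨le_csInf ⟨c, hc⟩ fun _ hb => ?_, ?_⟩
  · exact neg_le_of_abs_le (abs_le_of_mem_costSet hC hb)
  · exact (csInf_le (bddBelow_costSet hC) hc).trans (le_of_abs_le (abs_le_of_mem_costSet hC hc))

theorem minCost_of_notMem (hy₀ : y₀ ∉ Y) : minCost Y U f k T y₀ = 0 := by
  have : costSet Y U f k T y₀ = ∅ :=
    eq_empty_of_forall_notMem fun _ ⟨_, _, h, _⟩ => hy₀ (h.1 ▸ (h.2 0).2.1)
  rw [minCost, this, Real.sInf_empty]

theorem minCost_zero : minCost Y U f k 0 y₀ = 0 := by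
  have : costSet Y U f k 0 y₀ ⊆ {0} := fun _ ⟨_, _, _, hc⟩ => by simpa using hc
  rcases subset_singleton_iff_eq.1 this with h | h <;> simp [minCost, h]

theorem minCost_succ_le (hA : ∀ y ∈ Y, ∃ u ∈ U y, f (y, u) ∈ Y)
    (hC : ∀ p ∈ Gset Y U f, |k p| ≤ C) {p : (Fin m → ℝ) × V} (hp : p ∈ Gset Y U f) :
    minCost Y U f k (T + 1) p.1 ≤ k p + minCost Y U f k T (f p) := by
  rw [← sub_le_iff_le_add']
  refine le_csInf (costSet_nonempty hA hp.2.2) ?_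
  rintro _ ⟨y, u, h, rfl⟩
  rw [sub_le_iff_le_add']
  refine csInf_le (bddBelow_costSet hC) ⟨_, _, h.cons hp, ?_⟩
  simp [Finset.sum_range_succ', add_comm]

theorem bddBelow_image_add_minCost (hA : ∀ y ∈ Y, ∃ u ∈ U y, f (y, u) ∈ Y)
    (hC : ∀ p ∈ Gset Y U f, |k p| ≤ C) :
    BddBelow ((fun p => k p + minCost Y U f k T (f p)) '' Gset Y U f) := by
  refine ⟨-(C + T * C), ?_⟩
  rintro _ ⟨p, hp, rfl⟩
  have hk := neg_le_of_abs_le (hC p hp)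
  have hV := neg_le_of_abs_le (abs_minCost_le (T := T) hA hC hp.2.2)
  linarith

theorem minCost_succ_eqOn (hA : ∀ y ∈ Y, ∃ u ∈ U y, f (y, u) ∈ Y)
    (hC : ∀ p ∈ Gset Y U f, |k p| ≤ C) :
    EqOn (minCost Y U f k (T + 1))
      (fiberInf (Gset Y U f) fun p => k p + minCost Y U f k T (f p)) Y := by
  intro y₀ hy₀
  refine le_antisymm ?_ ?_
  · obtain ⟨u, hu, hfu⟩ := hA y₀ hy₀
    refine le_csInf ⟨_, u, ⟨hy₀, hu, hfu⟩, rfl⟩ ?_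
    rintro _ ⟨v, hv, rfl⟩
    exact minCost_succ_le hA hC hv
  · refine le_csInf (costSet_nonempty hA hy₀) ?_
    rintro _ ⟨y, u, h, rfl⟩
    calc fiberInf (Gset Y U f) (fun p => k p + minCost Y U f k T (f p)) y₀
        ≤ k (y₀, u 0) + minCost Y U f k T (f (y₀, u 0)) :=
          fiberInf_le (bddBelow_image_add_minCost hA hC) (h.1 ▸ h.mem_Gset 0)
      _ ≤ k (y₀, u 0) + ∑ t ∈ Finset.range T, k (y (t + 1), u (t + 1)) :=
          by gcongr; exact csInf_le (bddBelow_costSet hC) ⟨_, _, h.tail, rfl⟩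
      _ = ∑ t ∈ Finset.range (T + 1), k (y t, u t) := by
          rw [Finset.sum_range_succ', h.1, add_comm]

variable [TopologicalSpace V] [CompactSpace V]

theorem lowerSemicontinuousOn_minCost (hYcomp : IsCompact Y)
    (hUgraph : IsClosed {p : (Fin m → ℝ) × V | p.1 ∈ Y ∧ p.2 ∈ U p.1})
    (hf : Continuous f) (hk : Continuous k) (hA : ∀ y ∈ Y, ∃ u ∈ U y, f (y, u) ∈ Y)
    (hC : ∀ p ∈ Gset Y U f, |k p| ≤ C) (T : ℕ) :
    LowerSemicontinuousOn (minCost Y U f k T) Y := by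
  induction T with
  | zero =>
    have : minCost Y U f k 0 = fun _ => 0 := funext fun _ => minCost_zero
    exact this ▸ lowerSemicontinuousOn_const
  | succ T ih =>
    have hg : LowerSemicontinuousOn (fun p => k p + minCost Y U f k T (f p)) (Gset Y U f) :=
      hk.continuousOn.lowerSemicontinuousOn.add (ih.comp hf.continuousOn mapsTo_Gset)
    have hF := lowerSemicontinuousOn_fiberInf (isCompact_Gset hYcomp hUgraph hf) hg
      (bddBelow_image_add_minCost hA hC)
    rw [fst_image_Gset hA] at hF
    exact fun y hy => LowerSemicontinuousWithinAt.congr_of_eventuallyEq (hF y hy) hy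
      (minCost_succ_eqOn hA hC).symm.eventuallyEq_nhdsWithin

theorem measurable_minCost (hYcomp : IsCompact Y)
    (hUgraph : IsClosed {p : (Fin m → ℝ) × V | p.1 ∈ Y ∧ p.2 ∈ U p.1})
    (hf : Continuous f) (hk : Continuous k) (hA : ∀ y ∈ Y, ∃ u ∈ U y, f (y, u) ∈ Y)
    (hC : ∀ p ∈ Gset Y U f, |k p| ≤ C) (T : ℕ) :
    Measurable (minCost Y U f k T) :=
  (lowerSemicontinuousOn_minCost hYcomp hUgraph hf hk hA hC T).measurable_of_eq_const_off
    hYcomp.isClosed.measurableSet fun _ hy => minCost_of_notMem hy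

end Dynamics

section InvariantMeasure

variable {V : Type*} [MeasurableSpace V] {Y : Set (Fin m → ℝ)} {U : (Fin m → ℝ) → Set V}
  {f : (Fin m → ℝ) × V → (Fin m → ℝ)} {γ : Measure ((Fin m → ℝ) × V)}

theorem ae_mem_Gset_of_mem_Wset (hγ : γ ∈ Wset Y U f) : ∀ᵐ p ∂γ, p ∈ Gset Y U f :=
  ae_iff.2 hγ.2.1

theorem integrable_of_mem_Wset (hγ : γ ∈ Wset Y U f) {g : (Fin m → ℝ) × V → ℝ}
    (hg : Measurable g) {B : ℝ} (hB : ∀ p ∈ Gset Y U f, |g p| ≤ B) : Integrable g γ :=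
  have := hγ.1
  .of_bound hg.aestronglyMeasurable B ((ae_mem_Gset_of_mem_Wset hγ).mono hB)

theorem map_eq_map_fst_of_mem_Wset (hf : Measurable f) (hγ : γ ∈ Wset Y U f) :
    γ.map f = γ.map Prod.fst := by
  have := hγ.1
  refine ext_of_forall_integral_eq_of_IsFiniteMeasure fun φ => ?_
  have hint (g : (Fin m → ℝ) × V → Fin m → ℝ) (hg : Measurable g) :
      Integrable (fun p => φ (g p)) γ :=
    (φ.integrable (γ.map g)).comp_measurable hg
  rw [integral_map hf.aemeasurable φ.continuous.aestronglyMeasurable,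
    integral_map measurable_fst.aemeasurable φ.continuous.aestronglyMeasurable,
    ← sub_eq_zero, ← integral_sub (hint f hf) (hint _ measurable_fst)]
  exact hγ.2.2 φ φ.continuous.continuousOn

theorem integral_comp_eq_integral_fst_of_mem_Wset (hf : Measurable f) (hγ : γ ∈ Wset Y U f)
    {φ : (Fin m → ℝ) → ℝ} (hφ : Measurable φ) : ∫ p, φ (f p) ∂γ = ∫ p, φ p.1 ∂γ := by
  rw [← integral_map hf.aemeasurable hφ.aestronglyMeasurable, map_eq_map_fst_of_mem_Wset hf hγ,
    integral_map measurable_fst.aemeasurable hφ.aestronglyMeasurable]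

variable {k : (Fin m → ℝ) × V → ℝ} {C : ℝ}

theorem integral_minCost_le (hA : ∀ y ∈ Y, ∃ u ∈ U y, f (y, u) ∈ Y)
    (hC : ∀ p ∈ Gset Y U f, |k p| ≤ C) (hf : Measurable f) (hk : Measurable k)
    (hmeas : ∀ T, Measurable (minCost Y U f k T)) (hγ : γ ∈ Wset Y U f) (T : ℕ) :
    ∫ p, minCost Y U f k T p.1 ∂γ ≤ T * ∫ p, k p ∂γ := by
  induction T with
  | zero => simp [minCost_zero]
  | succ T ih =>
    have hint_k : Integrable k γ := integrable_of_mem_Wset hγ hk hC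
    have hint_fst (T : ℕ) : Integrable (fun p => minCost Y U f k T p.1) γ :=
      integrable_of_mem_Wset hγ ((hmeas T).comp measurable_fst) fun p hp =>
        abs_minCost_le hA hC hp.1
    have hint_f : Integrable (fun p => minCost Y U f k T (f p)) γ :=
      integrable_of_mem_Wset hγ ((hmeas T).comp hf) fun p hp =>
        abs_minCost_le hA hC hp.2.2
    calc ∫ p, minCost Y U f k (T + 1) p.1 ∂γ
        ≤ ∫ p, (k p + minCost Y U f k T (f p)) ∂γ :=
          integral_mono_ae (hint_fst _) (hint_k.add hint_f)
            ((ae_mem_Gset_of_mem_Wset hγ).mono fun p hp => minCost_succ_le hA hC hp)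
      _ = ∫ p, k p ∂γ + ∫ p, minCost Y U f k T p.1 ∂γ := by
          rw [integral_add hint_k hint_f, integral_comp_eq_integral_fst_of_mem_Wset hf hγ (hmeas T)]
      _ ≤ ((T + 1 : ℕ) : ℝ) * ∫ p, k p ∂γ := by push_cast; linarith

end InvariantMeasure

theorem stmt_9_general
    (Y : Set (Fin m → ℝ)) (hYcomp : IsCompact Y)
    (U : (Fin m → ℝ) → Set U₀)
    (hUgraph : IsClosed {p : (Fin m → ℝ) × U₀ | p.1 ∈ Y ∧ p.2 ∈ U p.1})
    (f : (Fin m → ℝ) × U₀ → (Fin m → ℝ)) (hf : Continuous f)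
    (k : (Fin m → ℝ) × U₀ → ℝ) (hk : Continuous k)
    (hA : ∀ y ∈ Y, ∃ u ∈ U y, f (y, u) ∈ Y) :
    ∀ T : ℕ, 1 ≤ T → ∀ γ ∈ Wset Y U f,
      ∫ p, VT Y U f k T p.1 ∂γ ≤ ∫ p, k p ∂γ := by
  intro T hT γ hγ
  obtain ⟨C, hC⟩ :=
    (isCompact_Gset hYcomp hUgraph hf).exists_bound_of_continuousOn hk.continuousOn
  simp only [Real.norm_eq_abs] at hC
  have hle := integral_minCost_le hA hC hf.measurable hk.measurable
    (measurable_minCost hYcomp hUgraph hf hk hA hC) hγ T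
  simp only [VT_eq_minCost_div, integral_div]
  rwa [div_le_iff₀ (Nat.cast_pos.2 hT), mul_comm]

theorem stmt_9
    (Y : Set (Fin m → ℝ)) (hYne : Y.Nonempty) (hYcomp : IsCompact Y)
    (U : (Fin m → ℝ) → Set U₀)
    (hUne : ∀ y ∈ Y, (U y).Nonempty) (hUcomp : ∀ y ∈ Y, IsCompact (U y))
    (hUgraph : IsClosed {p : (Fin m → ℝ) × U₀ | p.1 ∈ Y ∧ p.2 ∈ U p.1})
    (f : (Fin m → ℝ) × U₀ → (Fin m → ℝ)) (hf : Continuous f)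
    (k : (Fin m → ℝ) × U₀ → ℝ) (hk : Continuous k)
    (hA : ∀ y ∈ Y, ∃ u ∈ U y, f (y, u) ∈ Y) :
    ∀ T : ℕ, 1 ≤ T → ∀ γ ∈ Wset Y U f,
      ∫ p, VT Y U f k T p.1 ∂γ ≤ ∫ p, k p ∂γ :=
  stmt_9_general Y hYcomp U hUgraph f hf k hk hA
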